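/- Let γ > 0, 0 ≤ θ < 2π, and let λ ∈ ℝ be a real eigenvalue of the generalized gauge capacitance matrix 𝒞^{θ,γ} with eigenvector v decomposed as in the Chebyshev representation. If λ satisfies the characteristic equation P_N(μ^θ(λ))·P_N(μ^{−θ}(λ)) = e^{γ}·P_{N−1}(μ^θ(λ))·P_{N−1}(μ^{−θ}(λ)) where μ^θ(λ) = (e^{−iθ}λ − α)/(2√(βη)), then |P_N(μ^θ(λ))/P_{N−1}(μ^θ(λ))| = e^{γ/2} (assuming P_{N−1}(μ^θ(λ)) ≠ 0). -/

import Mathlib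

/-! Since `P_N` has real coefficients and `μ^{-θ}(λ) = conj μ^θ(λ)` for real `λ`, the characteristic
equation reads `|P_N(μ^θ)|² = e^γ |P_{N-1}(μ^θ)|²`; taking square roots gives the claim. -/

noncomputable def chebUC : ℕ → ℂ → ℂ
  | 0, _ => 1
  | 1, x => 2 * x
  | (n + 2), x => 2 * x * chebUC (n + 1) x - chebUC n x

noncomputable def PgC (γ : ℝ) : ℕ → ℂ → ℂ
  | 0, _ => 1
  | (n + 1), x => chebUC (n + 1) x + (Real.exp (-γ / 2) : ℂ) * chebUC n x

open ComplexConjugate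

lemma chebUC_conj (n : ℕ) (x : ℂ) : chebUC n (conj x) = conj (chebUC n x) := by
  induction n using Nat.twoStepInduction with
  | zero => simp [chebUC]
  | one => simp [chebUC, map_ofNat]
  | more n ih₁ ih₂ => simp [chebUC, ih₁, ih₂, map_ofNat]

lemma PgC_conj (γ : ℝ) (n : ℕ) (x : ℂ) : PgC γ n (conj x) = conj (PgC γ n x) := by
  cases n with
  | zero => simp [PgC]
  | succ n => simp only [PgC, map_add, map_mul, chebUC_conj, Complex.conj_ofReal]

lemma conj_exp_neg_mul_I_affine (θ lam a s : ℝ) :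
    conj ((Complex.exp (-(θ : ℂ) * Complex.I) * lam - a) / (2 * s)) =
      (Complex.exp ((θ : ℂ) * Complex.I) * lam - a) / (2 * s) := by
  simp [map_div₀, ← Complex.exp_conj, map_ofNat]

lemma norm_div_eq_sqrt_of_mul_conj {p q : ℂ} {c : ℝ} (hc : 0 ≤ c)
    (h : p * conj p = c * (q * conj q)) (hq : q ≠ 0) : ‖p / q‖ = √c := by
  have hnormSq : Complex.normSq p = c * Complex.normSq q := by
    rw [Complex.mul_conj, Complex.mul_conj] at h
    exact_mod_cast h
  have hnorm : ‖p‖ = √c * ‖q‖ := by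
    rw [Complex.norm_def, Complex.norm_def, hnormSq, Real.sqrt_mul hc]
  rw [norm_div, hnorm, mul_div_assoc, div_self (norm_ne_zero_iff.mpr hq), mul_one]

theorem stmt19_general (γ θ lam : ℝ) (N : ℕ)
    (α β η : ℝ)
    (μθ μmθ : ℂ)
    (hμθ : μθ = (Complex.exp (-(θ : ℂ) * Complex.I) * (lam : ℂ) - (α : ℂ)) /
        (2 * (Real.sqrt (β * η) : ℂ)))
    (hμmθ : μmθ = (Complex.exp ((θ : ℂ) * Complex.I) * (lam : ℂ) - (α : ℂ)) /
        (2 * (Real.sqrt (β * η) : ℂ)))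
    (hchar : PgC γ N μθ * PgC γ N μmθ =
        (Real.exp γ : ℂ) * (PgC γ (N - 1) μθ * PgC γ (N - 1) μmθ))
    (hne : PgC γ (N - 1) μθ ≠ 0) :
    ‖PgC γ N μθ / PgC γ (N - 1) μθ‖ = Real.exp (γ / 2) := by
  have hμmθ_conj : μmθ = conj μθ := by
    rw [hμθ, hμmθ, conj_exp_neg_mul_I_affine]
  rw [hμmθ_conj, PgC_conj, PgC_conj] at hchar
  rw [norm_div_eq_sqrt_of_mul_conj (Real.exp_nonneg γ) hchar hne, ← Real.exp_half]

theorem stmt19 (γ θ lam : ℝ) (hγ : 0 < γ) (N : ℕ) (hN : 1 ≤ N)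
    (α β η : ℝ)
    (hα : α = γ * Real.cosh (γ / 2) / Real.sinh (γ / 2))
    (hβ : β = γ / (1 - Real.exp γ))
    (hη : η = -γ / (1 - Real.exp (-γ)))
    (μθ μmθ : ℂ)
    (hμθ : μθ = (Complex.exp (-(θ : ℂ) * Complex.I) * (lam : ℂ) - (α : ℂ)) /
        (2 * (Real.sqrt (β * η) : ℂ)))
    (hμmθ : μmθ = (Complex.exp ((θ : ℂ) * Complex.I) * (lam : ℂ) - (α : ℂ)) /
        (2 * (Real.sqrt (β * η) : ℂ)))
    (hchar : PgC γ N μθ * PgC γ N μmθ =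
        (Real.exp γ : ℂ) * (PgC γ (N - 1) μθ * PgC γ (N - 1) μmθ))
    (hne : PgC γ (N - 1) μθ ≠ 0) :
    ‖PgC γ N μθ / PgC γ (N - 1) μθ‖ = Real.exp (γ / 2) :=
  stmt19_general γ θ lam N α β η μθ μmθ hμθ hμmθ hchar hne
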